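/- Let A_μ ∈ (−1,1), A_e > 0, and let X: ℝ → ℝ² be twice continuously differentiable and 2π-periodic. Define F_L(θ) = 2A_e X''(θ) − (2A_e A_μ/(1−A_μ)) R⁻¹ X'(θ). Then for every θ ∈ ℝ, F_L(θ) + (A_μ/π) ∫_{−π}^{π} M(θ,η) F_L(η) dη = 2A_e X''(θ) − (2A_e A_μ/(1−A_μ)) [ R⁻¹X'(θ) + (1/(2π)) ( −⟨e_r, X⟩ e_r(θ) + ⟨e_t, X⟩ e_t(θ) ) ]. -/

import Mathlib

/-! Since `M(θ,η) v = ½ (v − (e_r(η)·v) e_r(θ) + (e_t(η)·v) e_t(θ))`, the integral term only sees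
`∫ F_L`, `∫ e_r·F_L` and `∫ e_t·F_L`. The first vanishes because `F_L` is the derivative of the
periodic function `2A_e X' − c R⁻¹X`, where `c = 2A_eA_μ/(1−A_μ)`. Both frame vectors satisfy
`w' = w R⁻¹`, hence `w'' = −w`, so integrating by parts on a period gives `∫ w·X'' = −∫ w·X` and
`∫ w·R⁻¹X' = ∫ w·X`, i.e. `∫ w·F_L = −(2A_e + c) ∫ w·X`. The identity then reduces to
`A_μ (2A_e + c) = c`. -/

open Real intervalIntegral Matrix

/-- The radial unit vector `e_r(θ) = (cos θ, sin θ)`. -/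
noncomputable def er (θ : ℝ) : Fin 2 → ℝ := ![Real.cos θ, Real.sin θ]

/-- The tangential unit vector `e_t(θ) = (−sin θ, cos θ)`. -/
noncomputable def et (θ : ℝ) : Fin 2 → ℝ := ![-Real.sin θ, Real.cos θ]

/-- The matrix kernel
`M(θ,η) = (1/2)·[[1−cos(θ+η), −sin(θ+η)], [−sin(θ+η), 1+cos(θ+η)]]`. -/
noncomputable def Mmat (θ η : ℝ) : Matrix (Fin 2) (Fin 2) ℝ :=
  (1 / 2 : ℝ) •
    !![1 - Real.cos (θ + η), -Real.sin (θ + η);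
       -Real.sin (θ + η), 1 + Real.cos (θ + η)]

/-- The matrix `R⁻¹ = [[0,1],[−1,0]]`, inverse of the rotation by `π/2`. -/
noncomputable def Rinv : Matrix (Fin 2) (Fin 2) ℝ := !![0, 1; -1, 0]

open Function

section Calculus

variable {ι κ : Type*} [Fintype ι] {u v : ℝ → ι → ℝ} {u' v' : ι → ℝ} {x : ℝ}

theorem HasDerivAt.dotProduct (hu : HasDerivAt u u' x) (hv : HasDerivAt v v' x) :
    HasDerivAt (fun y => u y ⬝ᵥ v y) (u' ⬝ᵥ v x + u x ⬝ᵥ v') x := by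
  rw [_root_.dotProduct, _root_.dotProduct, ← Finset.sum_add_distrib]
  exact HasDerivAt.fun_sum fun i _ => (hasDerivAt_pi.1 hu i).mul (hasDerivAt_pi.1 hv i)

theorem HasDerivAt.mulVec (A : Matrix κ ι ℝ) (hv : HasDerivAt v v' x) :
    HasDerivAt (fun y => A *ᵥ v y) (A *ᵥ v') x :=
  hasDerivAt_pi.2 fun i =>
    HasDerivAt.fun_sum fun j _ => (hasDerivAt_pi.1 hv j).const_mul (A i j)

theorem HasDerivAt.vecMul (A : Matrix ι κ ℝ) (hu : HasDerivAt u u' x) :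
    HasDerivAt (fun y => u y ᵥ* A) (u' ᵥ* A) x := by
  simpa only [← mulVec_transpose] using hu.mulVec Aᵀ

end Calculus

section Periodic

variable {a b : ℝ}

theorem Function.Periodic.integral_eq_zero_of_hasDerivAt {E : Type*} [NormedAddCommGroup E]
    [NormedSpace ℝ E] [CompleteSpace E] {G G' : ℝ → E} (hG : Periodic G (b - a))
    (hderiv : ∀ x, HasDerivAt G (G' x) x) (hG' : Continuous G') :
    ∫ x in a..b, G' x = 0 := by
  rw [integral_eq_sub_of_hasDerivAt (fun x _ => hderiv x) (hG'.intervalIntegrable a b),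
    ← hG a, add_sub_cancel, sub_self]

theorem Function.Periodic.integral_dotProduct_deriv {ι : Type*} [Fintype ι]
    {u v u' v' : ℝ → ι → ℝ} (hu : Periodic u (b - a)) (hv : Periodic v (b - a))
    (hu' : ∀ x, HasDerivAt u (u' x) x) (hv' : ∀ x, HasDerivAt v (v' x) x)
    (hcu' : Continuous u') (hcv' : Continuous v') :
    ∫ x in a..b, u x ⬝ᵥ v' x = -∫ x in a..b, u' x ⬝ᵥ v x := by
  have hcu : Continuous u := Differentiable.continuous fun x => (hu' x).differentiableAt
  have hcv : Continuous v := Differentiable.continuous fun x => (hv' x).differentiableAt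
  have hsum := Periodic.integral_eq_zero_of_hasDerivAt (a := a) (b := b)
    (fun x => by simp only [hu x, hv x]) (fun x => (hu' x).dotProduct (hv' x))
    ((hcu'.dotProduct hcv).add (hcu.dotProduct hcv'))
  rw [integral_add ((hcu'.dotProduct hcv).intervalIntegrable a b)
    ((hcu.dotProduct hcv').intervalIntegrable a b)] at hsum
  linarith

theorem Function.Periodic.deriv {E : Type*} [NormedAddCommGroup E] [NormedSpace ℝ E]
    {f : ℝ → E} {c : ℝ} (hf : Periodic f c) : Periodic (_root_.deriv f) c := fun x => by
  rw [← deriv_comp_add_const, show (fun y => f (y + c)) = f from funext hf]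

end Periodic

theorem hasDerivAt_er (θ : ℝ) : HasDerivAt er (et θ) θ := by
  refine hasDerivAt_pi.2 fun i => ?_
  fin_cases i
  · simpa [er, et] using hasDerivAt_cos θ
  · simpa [er, et] using hasDerivAt_sin θ

theorem hasDerivAt_et (θ : ℝ) : HasDerivAt et (-er θ) θ := by
  refine hasDerivAt_pi.2 fun i => ?_
  fin_cases i
  · simpa [er, et] using (hasDerivAt_sin θ).fun_neg
  · simpa [er, et] using hasDerivAt_cos θ

theorem continuous_er : Continuous er :=
  Differentiable.continuous fun θ => (hasDerivAt_er θ).differentiableAt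

theorem continuous_et : Continuous et :=
  Differentiable.continuous fun θ => (hasDerivAt_et θ).differentiableAt

theorem er_vecMul_Rinv (θ : ℝ) : er θ ᵥ* Rinv = et θ := by
  ext i; fin_cases i <;> simp [er, et, Rinv, vecMul, dotProduct]

theorem et_vecMul_Rinv (θ : ℝ) : et θ ᵥ* Rinv = -er θ := by
  ext i; fin_cases i <;> simp [er, et, Rinv, vecMul, dotProduct]

theorem periodic_er : Periodic er (2 * π) := fun θ => by simp [er]

theorem periodic_et : Periodic et (2 * π) := fun θ => by simp [et]

theorem Rinv_mul_Rinv : Rinv * Rinv = -1 := by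
  ext i j; fin_cases i <;> fin_cases j <;> simp [Rinv]

theorem Mmat_mulVec (θ η : ℝ) (v : Fin 2 → ℝ) :
    Mmat θ η *ᵥ v = (1 / 2 : ℝ) • (v - (er η ⬝ᵥ v) • er θ + (et η ⬝ᵥ v) • et θ) := by
  ext i
  fin_cases i <;>
  · simp only [Mmat, er, et, mulVec, dotProduct, Fin.sum_univ_two, Pi.add_apply, Pi.sub_apply,
      Pi.smul_apply, Matrix.smul_apply, of_apply, cons_val', cons_val_zero, cons_val_one,
      cons_val_fin_one, Fin.zero_eta, Fin.mk_one, smul_eq_mul, cos_add, sin_add]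
    ring

theorem integral_Mmat_mulVec {a b : ℝ} {F : ℝ → Fin 2 → ℝ} (hF : Continuous F) (θ : ℝ) :
    ∫ η in a..b, Mmat θ η *ᵥ F η = (1 / 2 : ℝ) • ((∫ η in a..b, F η) -
      (∫ η in a..b, er η ⬝ᵥ F η) • er θ + (∫ η in a..b, et η ⬝ᵥ F η) • et θ) := by
  simp_rw [Mmat_mulVec]
  have := continuous_er
  have := continuous_et
  rw [integral_smul, integral_add, integral_sub, intervalIntegral.integral_smul_const,
    intervalIntegral.integral_smul_const]
  all_goals apply Continuous.intervalIntegrable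
  all_goals fun_prop

section LinearForce

noncomputable def linearForce (α β : ℝ) (X : ℝ → Fin 2 → ℝ) (θ : ℝ) : Fin 2 → ℝ :=
  α • deriv (deriv X) θ - β • Rinv *ᵥ deriv X θ

variable {a b α β : ℝ} {X : ℝ → Fin 2 → ℝ}

theorem continuous_linearForce (hX : ContDiff ℝ 2 X) : Continuous (linearForce α β X) := by
  have := hX.continuous_deriv one_le_two
  have := (hX.deriv' (n := 1)).continuous_deriv le_rfl
  unfold linearForce
  fun_prop

theorem integral_linearForce (hX : ContDiff ℝ 2 X) (hper : Periodic X (b - a)) :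
    ∫ x in a..b, linearForce α β X x = 0 := by
  refine Periodic.integral_eq_zero_of_hasDerivAt (G := fun x => α • deriv X x - β • Rinv *ᵥ X x)
    (fun x => by simp only [hper x, hper.deriv x]) (fun x => ?_) (continuous_linearForce hX)
  exact ((hX.deriv' (n := 1)).differentiable one_ne_zero x).hasDerivAt.const_smul α |>.sub
    (((hX.differentiable two_ne_zero x).hasDerivAt.mulVec Rinv).const_smul β)

theorem integral_dotProduct_linearForce (hX : ContDiff ℝ 2 X) (hper : Periodic X (b - a))
    {w : ℝ → Fin 2 → ℝ} (hw : ∀ x, HasDerivAt w (w x ᵥ* Rinv) x) (hwper : Periodic w (b - a)) :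
    ∫ x in a..b, w x ⬝ᵥ linearForce α β X x = -(α + β) * ∫ x in a..b, w x ⬝ᵥ X x := by
  set w' := fun x => w x ᵥ* Rinv
  have hw' (x : ℝ) : HasDerivAt w' (-w x) x := by
    simpa [w', vecMul_vecMul, Rinv_mul_Rinv, vecMul_neg, vecMul_one] using (hw x).vecMul Rinv
  have hcw : Continuous w := Differentiable.continuous fun x => (hw x).differentiableAt
  have hcw' : Continuous w' := hcw.matrix_vecMul continuous_const
  have hcX' : Continuous (deriv X) := hX.continuous_deriv one_le_two
  have hcX'' : Continuous (deriv (deriv X)) := (hX.deriv' (n := 1)).continuous_deriv le_rfl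
  have hX2 : ∫ x in a..b, w x ⬝ᵥ deriv (deriv X) x = -∫ x in a..b, w' x ⬝ᵥ deriv X x :=
    hwper.integral_dotProduct_deriv hper.deriv hw
      (fun x => ((hX.deriv' (n := 1)).differentiable one_ne_zero x).hasDerivAt) hcw' hcX''
  have hX1 : ∫ x in a..b, w' x ⬝ᵥ deriv X x = ∫ x in a..b, w x ⬝ᵥ X x := by
    rw [Periodic.integral_dotProduct_deriv (fun x => by simp only [w', hwper x]) hper hw'
      (fun x => (hX.differentiable two_ne_zero x).hasDerivAt) hcw.neg hcX']
    simp only [neg_dotProduct, intervalIntegral.integral_neg, neg_neg]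
  calc ∫ x in a..b, w x ⬝ᵥ linearForce α β X x
      = α * (∫ x in a..b, w x ⬝ᵥ deriv (deriv X) x) - β * ∫ x in a..b, w' x ⬝ᵥ deriv X x := by
        simp only [linearForce, dotProduct_sub, dotProduct_smul, dotProduct_mulVec, smul_eq_mul]
        rw [integral_sub, integral_const_mul, integral_const_mul]
        all_goals apply Continuous.intervalIntegrable
        all_goals fun_prop
    _ = -(α + β) * ∫ x in a..b, w x ⬝ᵥ X x := by rw [hX2, hX1]; ring

end LinearForce

theorem linear_force_solves (Aμ Ae : ℝ) (hμ : Aμ ∈ Set.Ioo (-1 : ℝ) 1)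
    (X : ℝ → Fin 2 → ℝ) (hX : ContDiff ℝ 2 X) (hper : ∀ θ : ℝ, X (θ + 2 * π) = X θ)
    (FL : ℝ → Fin 2 → ℝ)
    (hFL : ∀ θ, FL θ =
      (2 * Ae) • deriv (deriv X) θ - (2 * Ae * Aμ / (1 - Aμ)) • Rinv.mulVec (deriv X θ)) :
    ∀ θ : ℝ,
      FL θ + (Aμ / π) • (∫ η in (-π)..π, (Mmat θ η).mulVec (FL η)) =
        (2 * Ae) • deriv (deriv X) θ -
          (2 * Ae * Aμ / (1 - Aμ)) •
            (Rinv.mulVec (deriv X θ) +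
              (1 / (2 * π)) •
                (-(∫ η in (-π)..π, er η ⬝ᵥ X η) • er θ +
                  (∫ η in (-π)..π, et η ⬝ᵥ X η) • et θ)) := by
  intro θ
  obtain rfl : FL = linearForce (2 * Ae) (2 * Ae * Aμ / (1 - Aμ)) X := funext hFL
  have hT : π - -π = 2 * π := by ring
  have hXper : Periodic X (π - -π) := hT ▸ hper
  rw [integral_Mmat_mulVec (continuous_linearForce hX) θ, integral_linearForce hX hXper,
    integral_dotProduct_linearForce hX hXper
      (fun x => by rw [er_vecMul_Rinv]; exact hasDerivAt_er x) (hT ▸ periodic_er),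
    integral_dotProduct_linearForce hX hXper
      (fun x => by rw [et_vecMul_Rinv]; exact hasDerivAt_et x) (hT ▸ periodic_et)]
  have h1μ : 1 - Aμ ≠ 0 := (sub_pos.2 hμ.2).ne'
  simp only [linearForce]
  match_scalars <;> field_simp <;> ring
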